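/- For any x ≥ 0, with probability at least 1 − 2 e^{−x} one has |E[Δ_θ | S]| ≤ √( 2 (E[V_θ] + E[V_θ | S]) (KL(p̂_S ‖ p⁰) + 2x) ). -/

import Mathlib

/-!
Fix `c > 0`. For each `ϑ`, averaging the canonical-pair inequality
`E[exp (λ Δ_ϑ - λ² V_ϑ / 2)] ≤ 1` over `λ ∼ 𝒩(0, 1/c)` gives
`E[exp (Δ_ϑ² / (2 (V_ϑ + c))) √(c / (V_ϑ + c))] ≤ 1`. Integrating over the prior `p⁰` and using
Markov's inequality, the `p⁰`-average of this quantity is at most `eˣ` outside an event of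
probability `e⁻ˣ`. There, the Donsker–Varadhan change of measure from `p⁰` to `p̂_S` bounds
`E[Δ_θ² / (2 (V_θ + c)) | S]` by `KL + x + E[log (1 + V_θ / c) | S] / 2`, and by Jensen the last
term is at most `x` unless `E[V_θ | S] > c (e^{2x} - 1)`, an event of probability at most `e⁻ˣ` by
Markov once `c ≥ E[V_θ]`. The AM-GM inequality then gives
`|E[Δ_θ | S]| ≤ √(2 (c + E[V_θ | S]) (KL + 2x))`. Since `E[V_θ]` may vanish, the theorem follows by
letting `c` decrease to `E[V_θ]` along a sequence.
-/

open MeasureTheory ProbabilityTheory InformationTheory Real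
open scoped ENNReal NNReal

section Integrability

variable {α : Type*} [MeasurableSpace α] {μ : Measure α}

theorem integrable_and_integral_le_of_lintegral_le {f : α → ℝ} (hf : AEStronglyMeasurable f μ)
    (hf0 : 0 ≤ᵐ[μ] f) {B : ℝ} (hB : 0 ≤ B) (h : ∫⁻ a, ENNReal.ofReal (f a) ∂μ ≤ ENNReal.ofReal B) :
    Integrable f μ ∧ ∫ a, f a ∂μ ≤ B := by
  refine ⟨⟨hf, (hasFiniteIntegral_iff_ofReal hf0).2 (h.trans_lt ENNReal.ofReal_lt_top)⟩, ?_⟩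
  rw [integral_eq_lintegral_of_nonneg_ae hf0 hf]
  exact ENNReal.toReal_le_of_le_ofReal hB h

theorem integrable_min_natCast [IsFiniteMeasure μ] {f : α → ℝ} (hf : Measurable f) (hf0 : 0 ≤ f)
    (n : ℕ) : Integrable (fun a => min (f a) n) μ :=
  .of_bound (hf.min measurable_const).aestronglyMeasurable n
    (.of_forall fun a => by
      rw [norm_of_nonneg (le_min (hf0 a) n.cast_nonneg)]
      exact min_le_right _ _)

theorem integrable_and_integral_le_of_integral_min_le [IsFiniteMeasure μ] {f : α → ℝ}
    (hf : Measurable f) (hf0 : 0 ≤ f) {B : ℝ} (h : ∀ n : ℕ, ∫ a, min (f a) n ∂μ ≤ B) :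
    Integrable f μ ∧ ∫ a, f a ∂μ ≤ B := by
  have hmin0 : ∀ (n : ℕ) a, 0 ≤ min (f a) n := fun n a => le_min (hf0 a) n.cast_nonneg
  have hmin : ∀ n : ℕ, Integrable (fun a => min (f a) n) μ := fun n =>
    integrable_min_natCast hf hf0 n
  have hB : 0 ≤ B := (integral_nonneg (hmin0 0)).trans (h 0)
  refine integrable_and_integral_le_of_lintegral_le hf.aestronglyMeasurable (.of_forall hf0) hB ?_
  have hsup : ∀ a, ⨆ n : ℕ, ENNReal.ofReal (min (f a) n) = ENNReal.ofReal (f a) := fun a =>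
    le_antisymm (iSup_le fun n => ENNReal.ofReal_le_ofReal (min_le_left _ _))
      (le_iSup_of_le ⌈f a⌉₊ (by rw [min_eq_left (Nat.le_ceil _)]))
  rw [← lintegral_congr hsup, lintegral_iSup (fun n => (hf.min measurable_const).ennreal_ofReal)
    fun i j hij a => ENNReal.ofReal_le_ofReal (min_le_min_left _ (Nat.cast_le.2 hij))]
  refine iSup_le fun n => ?_
  rw [← ofReal_integral_eq_lintegral_ofReal (hmin n) (.of_forall (hmin0 n))]
  exact ENNReal.ofReal_le_ofReal (h n)

end Integrability

section DonskerVaradhan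

variable {α : Type*} [MeasurableSpace α] {q p : Measure α}
  [IsProbabilityMeasure q] [IsProbabilityMeasure p]

theorem integral_le_integral_llr_add_log_integral_exp (hqp : q ≪ p)
    (hllr : Integrable (llr q p) q) {f : α → ℝ} (hf : Integrable f q)
    (hexp : Integrable (fun a => exp (f a)) p) :
    ∫ a, f a ∂q ≤ ∫ a, llr q p a ∂q + log (∫ a, exp (f a) ∂p) := by
  -- Gibbs' inequality for `q` against the tilted measure `p.tilted f`
  have : IsProbabilityMeasure (p.tilted f) := isProbabilityMeasure_tilted hexp
  have h := integral_llr_add_sub_measure_univ_nonneg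
    (hqp.trans (absolutelyContinuous_tilted hexp)) (integrable_llr_tilted_right hqp hf hllr hexp)
  rw [integral_llr_tilted_right hqp hf hexp hllr] at h
  simp only [probReal_univ, add_sub_cancel_right] at h
  linarith

theorem integral_llr_nonneg (hqp : q ≪ p) (hllr : Integrable (llr q p) q) :
    0 ≤ ∫ a, llr q p a ∂q := by
  simpa using integral_llr_add_sub_measure_univ_nonneg hqp hllr

theorem integrable_and_integral_le_of_lintegral_exp_sub_le (hqp : q ≪ p)
    (hllr : Integrable (llr q p) q) {f g : α → ℝ} (hf : Measurable f) (hf0 : 0 ≤ f)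
    (hg : Measurable g) (hgq : Integrable g q) {B : ℝ} (hB : 0 < B)
    (hexp : ∫⁻ a, ENNReal.ofReal (exp (f a - g a)) ∂p ≤ ENNReal.ofReal B) :
    Integrable f q ∧ ∫ a, f a ∂q ≤ ∫ a, llr q p a ∂q + ∫ a, g a ∂q + log B := by
  -- `f` is not known to be `q`-integrable, so Donsker–Varadhan is applied to `min f n - g`
  refine integrable_and_integral_le_of_integral_min_le hf hf0 fun n => ?_
  have hmin := integrable_min_natCast (μ := q) hf hf0 n
  obtain ⟨hexp_int, hexp_le⟩ := integrable_and_integral_le_of_lintegral_le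
    (f := fun a => exp (min (f a) n - g a)) (by fun_prop) (.of_forall fun a => (exp_pos _).le)
    hB.le ((lintegral_mono fun a => ENNReal.ofReal_le_ofReal <| exp_le_exp.2 <|
      sub_le_sub_right (min_le_left _ _) _).trans hexp)
  have hdv := integral_le_integral_llr_add_log_integral_exp (f := fun a => min (f a) n - g a)
    hqp hllr (hmin.sub hgq) hexp_int
  rw [integral_sub hmin hgq] at hdv
  have := log_le_log (integral_exp_pos hexp_int) hexp_le
  linarith

end DonskerVaradhan

section GaussianIntegral

variable {b : ℝ}

theorem exp_neg_mul_sq_add_mul (hb : b ≠ 0) (a x : ℝ) :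
    exp (-b * x ^ 2 + a * x) = exp (a ^ 2 / (4 * b)) * exp (-b * (x - a / (2 * b)) ^ 2) := by
  rw [← exp_add]
  congr 1
  field_simp
  ring

theorem integrable_exp_neg_mul_sq_add_mul (hb : 0 < b) (a : ℝ) :
    Integrable fun x : ℝ => exp (-b * x ^ 2 + a * x) := by
  simp_rw [exp_neg_mul_sq_add_mul hb.ne']
  exact ((integrable_exp_neg_mul_sq hb).comp_sub_right _).const_mul _

theorem integral_exp_neg_mul_sq_add_mul (hb : 0 < b) (a : ℝ) :
    ∫ x : ℝ, exp (-b * x ^ 2 + a * x) = exp (a ^ 2 / (4 * b)) * √(π / b) := by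
  simp_rw [exp_neg_mul_sq_add_mul hb.ne', integral_const_mul,
    integral_sub_right_eq_self (fun x => exp (-b * x ^ 2)), integral_gaussian]

end GaussianIntegral

/-- The average of `exp (λ d - λ² v / 2)` over `λ ∼ 𝒩(0, 1/c)`
(`lintegral_exp_gaussianReal`). -/
noncomputable def normalMixture (c d v : ℝ) : ℝ :=
  exp (d ^ 2 / (2 * (v + c))) * √(c / (v + c))

@[fun_prop]
theorem Measurable.normalMixture {α : Type*} [MeasurableSpace α] {f g : α → ℝ}
    (hf : Measurable f) (hg : Measurable g) (c : ℝ) :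
    Measurable fun a => normalMixture c (f a) (g a) := by
  unfold _root_.normalMixture
  fun_prop

theorem normalMixture_eq_exp_sub {c v : ℝ} (hc : 0 < c) (hv : 0 ≤ v) (d : ℝ) :
    normalMixture c d v = exp (d ^ 2 / (2 * (v + c)) - log (1 + v / c) / 2) := by
  have hsq : exp (-(log (1 + v / c) / 2)) ^ 2 = c / (v + c) := by
    rw [sq, ← exp_add, show -(log (1 + v / c) / 2) + -(log (1 + v / c) / 2) = -log (1 + v / c) by
      ring, exp_neg, exp_log (by positivity)]
    field_simp
    ring
  rw [normalMixture, sub_eq_add_neg, exp_add, ← hsq, sqrt_sq (exp_pos _).le]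

theorem lintegral_exp_gaussianReal {c v : ℝ} (hc : 0 < c) (hv : 0 ≤ v) (d : ℝ) :
    ∫⁻ t, ENNReal.ofReal (exp (t * d - t ^ 2 / 2 * v)) ∂gaussianReal 0 (c.toNNReal)⁻¹ =
      ENNReal.ofReal (normalMixture c d v) := by
  have hvar : ((c.toNNReal)⁻¹ : ℝ≥0) ≠ 0 := by simp [hc]
  have hdens : ∀ t, gaussianPDFReal 0 (c.toNNReal)⁻¹ t * exp (t * d - t ^ 2 / 2 * v) =
      √(c / (2 * π)) * exp (-((v + c) / 2) * t ^ 2 + d * t) := by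
    intro t
    rw [gaussianPDFReal, NNReal.coe_inv, Real.coe_toNNReal _ hc.le, mul_assoc, ← exp_add,
      ← sqrt_inv]
    congr 2
    · field_simp
    · field_simp
      ring
  have hint : Integrable fun t => √(c / (2 * π)) * exp (-((v + c) / 2) * t ^ 2 + d * t) :=
    (integrable_exp_neg_mul_sq_add_mul (by positivity) d).const_mul _
  rw [gaussianReal_of_var_ne_zero _ hvar,
    lintegral_withDensity_eq_lintegral_mul _ (measurable_gaussianPDF _ _) (by fun_prop)]
  simp only [Pi.mul_apply, gaussianPDF, ← ENNReal.ofReal_mul (gaussianPDFReal_nonneg _ _ _), hdens]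
  rw [← ofReal_integral_eq_lintegral_ofReal hint (.of_forall fun t => by positivity),
    integral_const_mul, integral_exp_neg_mul_sq_add_mul (by positivity), normalMixture,
    mul_left_comm, ← sqrt_mul (by positivity)]
  congr 2
  · rw [show 4 * ((v + c) / 2) = 2 * (v + c) by ring]
  · field_simp

theorem lintegral_normalMixture_le_one {Ω : Type*} [MeasurableSpace Ω] {μ : Measure Ω} [SFinite μ]
    {D V : Ω → ℝ} (hD : Measurable D) (hV : Measurable V) (hV0 : ∀ ω, 0 ≤ V ω)
    (hcanon : ∀ t : ℝ, ∫⁻ ω, ENNReal.ofReal (exp (t * D ω - t ^ 2 / 2 * V ω)) ∂μ ≤ 1)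
    {c : ℝ} (hc : 0 < c) :
    ∫⁻ ω, ENNReal.ofReal (normalMixture c (D ω) (V ω)) ∂μ ≤ 1 := by
  calc ∫⁻ ω, ENNReal.ofReal (normalMixture c (D ω) (V ω)) ∂μ
      = ∫⁻ ω, ∫⁻ t, ENNReal.ofReal (exp (t * D ω - t ^ 2 / 2 * V ω))
          ∂gaussianReal 0 (c.toNNReal)⁻¹ ∂μ := by
        simp_rw [lintegral_exp_gaussianReal hc (hV0 _)]
    _ = ∫⁻ t, ∫⁻ ω, ENNReal.ofReal (exp (t * D ω - t ^ 2 / 2 * V ω)) ∂μ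
          ∂gaussianReal 0 (c.toNNReal)⁻¹ :=
        lintegral_lintegral_swap (by fun_prop)
    _ ≤ ∫⁻ _, 1 ∂gaussianReal 0 (c.toNNReal)⁻¹ := lintegral_mono hcanon
    _ = 1 := by simp

section WeightedBounds

variable {α : Type*} [MeasurableSpace α] {μ : Measure α}

theorem integral_log_one_add_div_le [IsProbabilityMeasure μ] {W : α → ℝ} (hW0 : ∀ a, 0 ≤ W a)
    (hW : Integrable W μ) {c : ℝ} (hc : 0 < c) :
    Integrable (fun a => log (1 + W a / c)) μ ∧
      ∫ a, log (1 + W a / c) ∂μ ≤ log (1 + (∫ a, W a ∂μ) / c) := by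
  have hlog_int : Integrable (fun a => log (1 + W a / c)) μ := by
    refine (hW.div_const c).mono' (measurable_log.comp_aemeasurable
      ((hW.aemeasurable.div_const c).const_add 1)).aestronglyMeasurable (.of_forall fun a => ?_)
    have h1 : 1 ≤ 1 + W a / c := le_add_of_nonneg_right (div_nonneg (hW0 a) hc.le)
    rw [norm_of_nonneg (log_nonneg h1)]
    linarith [log_le_sub_one_of_pos (zero_lt_one.trans_le h1)]
  refine ⟨hlog_int, ?_⟩
  have hconc : ConcaveOn ℝ (Set.Ici 1) log :=
    strictConcaveOn_log_Ioi.concaveOn.subset (Set.Ici_subset_Ioi.2 one_pos) (convex_Ici 1)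
  have := hconc.le_map_integral (continuousOn_log.mono fun x hx => (zero_lt_one.trans_le hx).ne')
    isClosed_Ici (.of_forall fun a => le_add_of_nonneg_right (div_nonneg (hW0 a) hc.le))
    ((integrable_const 1).add (hW.div_const c)) hlog_int
  rwa [integral_add (integrable_const 1) (hW.div_const c), integral_div, integral_const,
    probReal_univ, one_smul] at this

theorem abs_integral_le_sqrt_of_integral_sq_div_le {D w : α → ℝ} (hw : ∀ a, 0 < w a)
    (hD : Integrable D μ) (hwμ : Integrable w μ) (hw_pos : 0 < ∫ a, w a ∂μ)
    (hDw : Integrable (fun a => D a ^ 2 / (2 * w a)) μ) {M : ℝ} (hM : 0 < M)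
    (hDwM : ∫ a, D a ^ 2 / (2 * w a) ∂μ ≤ M) :
    |∫ a, D a ∂μ| ≤ √(2 * (∫ a, w a ∂μ) * M) := by
  set R := √(2 * (∫ a, w a ∂μ) * M)
  have hR : 0 < R := sqrt_pos.2 (by positivity)
  have hR2 : R ^ 2 = 2 * (∫ a, w a ∂μ) * M := sq_sqrt (by positivity)
  set s := R / ∫ a, w a ∂μ
  have hs : 0 < s := by positivity
  -- AM-GM: `2 |d| ≤ d² / (s w) + s w`
  have hpt : ∀ a, |D a| ≤ D a ^ 2 / (2 * w a) / s + s / 2 * w a := fun a => by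
    have := hw a
    rw [div_div, div_add' _ _ _ (by positivity), le_div_iff₀ (by positivity)]
    nlinarith [sq_nonneg (|D a| - s * w a), sq_abs (D a)]
  calc |∫ a, D a ∂μ| ≤ ∫ a, |D a| ∂μ := abs_integral_le_integral_abs
    _ ≤ ∫ a, (D a ^ 2 / (2 * w a) / s + s / 2 * w a) ∂μ :=
      integral_mono hD.abs ((hDw.div_const s).add (hwμ.const_mul _)) hpt
    _ = (∫ a, D a ^ 2 / (2 * w a) ∂μ) / s + s / 2 * ∫ a, w a ∂μ := by
      rw [integral_add (hDw.div_const s) (hwμ.const_mul _), integral_div, integral_const_mul]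
    _ ≤ M / s + s / 2 * ∫ a, w a ∂μ := by gcongr
    _ = R := by
      simp only [s]
      field_simp
      linear_combination -hR2

end WeightedBounds

theorem abs_integral_le_of_lintegral_normalMixture_le {α : Type*} [MeasurableSpace α]
    {q p : Measure α} [IsProbabilityMeasure q] [IsProbabilityMeasure p] (hqp : q ≪ p)
    (hllr : Integrable (llr q p) q) {D W : α → ℝ} (hD : Measurable D) (hW : Measurable W)
    (hW0 : ∀ a, 0 ≤ W a) (hDq : Integrable D q) (hWq : Integrable W q) {c y : ℝ} (hc : 0 < c)
    (hy : 0 < y)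
    (hmix : ∫⁻ a, ENNReal.ofReal (normalMixture c (D a) (W a)) ∂p ≤ ENNReal.ofReal (exp y))
    (hWy : ∫ a, W a ∂q ≤ c * (exp (2 * y) - 1)) :
    |∫ a, D a ∂q| ≤ √(2 * (c + ∫ a, W a ∂q) * (∫ a, llr q p a ∂q + 2 * y)) := by
  have hWq0 : 0 ≤ ∫ a, W a ∂q := integral_nonneg hW0
  obtain ⟨hlog_int, hlog_le⟩ := integral_log_one_add_div_le hW0 hWq hc
  have hlog_y : log (1 + (∫ a, W a ∂q) / c) ≤ 2 * y := by
    rwa [log_le_iff_le_exp (by positivity), ← le_sub_iff_add_le', div_le_iff₀ hc, mul_comm]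
  obtain ⟨hDW_int, hDW_le⟩ := integrable_and_integral_le_of_lintegral_exp_sub_le hqp hllr
    (f := fun a => D a ^ 2 / (2 * (W a + c))) (g := fun a => log (1 + W a / c) / 2)
    (by fun_prop) (fun a => by positivity [hW0 a]) (by fun_prop) (hlog_int.div_const 2) (exp_pos y)
    (by simpa only [normalMixture_eq_exp_sub hc (hW0 _)] using hmix)
  rw [log_exp, integral_div] at hDW_le
  have hWc : ∫ a, (W a + c) ∂q = c + ∫ a, W a ∂q := by
    rw [integral_add hWq (integrable_const c), integral_const, probReal_univ, one_smul, add_comm]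
  have hK := integral_llr_nonneg hqp hllr
  rw [← hWc]
  exact abs_integral_le_sqrt_of_integral_sq_div_le (w := fun a => W a + c)
    (fun a => by positivity [hW0 a]) hDq (hWq.add (integrable_const c)) (hWc ▸ by positivity)
    hDW_int (by positivity) (by linarith)

section Markov

variable {α : Type*} [MeasurableSpace α] {μ : Measure α}

theorem measure_le_of_forall_eventually_mem {s : Set α} {t : ℕ → Set α} {r : ℝ≥0∞}
    (ht : ∀ n, μ (t n) ≤ r) (hs : ∀ a ∈ s, ∀ᶠ n in Filter.atTop, a ∈ t n) : μ s ≤ r := by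
  -- continuity from below holds for arbitrary, not necessarily measurable, sets
  have hmono : Monotone fun N => ⋂ n ≥ N, t n := fun N M hNM =>
    Set.biInter_mono (fun n hn => hNM.trans hn) fun _ _ => le_rfl
  calc μ s ≤ μ (⋃ N, ⋂ n ≥ N, t n) := measure_mono fun a ha => by
        simpa using Filter.eventually_atTop.1 (hs a ha)
    _ = ⨆ N, μ (⋂ n ≥ N, t n) := hmono.measure_iUnion
    _ ≤ r := iSup_le fun N => (measure_mono (Set.biInter_subset_of_mem le_rfl)).trans (ht N)

theorem measure_lt_le_ofReal_integral_div {f : α → ℝ} (hf0 : ∀ a, 0 ≤ f a) (hf : Integrable f μ)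
    {ε : ℝ} (hε : 0 < ε) : μ {a | ε < f a} ≤ ENNReal.ofReal ((∫ a, f a ∂μ) / ε) := by
  calc μ {a | ε < f a} ≤ μ {a | ENNReal.ofReal ε ≤ ENNReal.ofReal (f a)} :=
        measure_mono (Set.ofPred_subset_ofPred.2 fun _ h => ENNReal.ofReal_le_ofReal h.le)
    _ ≤ (∫⁻ a, ENNReal.ofReal (f a) ∂μ) / ENNReal.ofReal ε :=
        meas_ge_le_lintegral_div hf.aemeasurable.ennreal_ofReal (by simpa using hε)
          ENNReal.ofReal_ne_top
    _ = ENNReal.ofReal ((∫ a, f a ∂μ) / ε) := by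
        rw [← ofReal_integral_eq_lintegral_ofReal hf (.of_forall hf0),
          ENNReal.ofReal_div_of_pos hε]

end Markov

section PACBayes

variable {Ω Θ : Type*} [MeasurableSpace Ω] [MeasurableSpace Θ] {μ : Measure Ω}
  {Δ V : Θ → Ω → ℝ} {p₀ : Measure Θ}

theorem measure_exp_lt_lintegral_normalMixture_le [SFinite μ] [IsProbabilityMeasure p₀]
    (hΔ : Measurable (Function.uncurry Δ)) (hV : Measurable (Function.uncurry V))
    (hV0 : ∀ ϑ ω, 0 ≤ V ϑ ω)
    (hcanon : ∀ ϑ, ∀ t : ℝ, ∫⁻ ω, ENNReal.ofReal (exp (t * Δ ϑ ω - t ^ 2 / 2 * V ϑ ω)) ∂μ ≤ 1)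
    {c : ℝ} (hc : 0 < c) (x : ℝ) :
    μ {ω | ENNReal.ofReal (exp x) < ∫⁻ ϑ, ENNReal.ofReal (normalMixture c (Δ ϑ ω) (V ϑ ω)) ∂p₀}
      ≤ ENNReal.ofReal (exp (-x)) := by
  have hmeas : Measurable fun z : Ω × Θ =>
      ENNReal.ofReal (normalMixture c (Δ z.2 z.1) (V z.2 z.1)) := by
    have := hΔ.comp measurable_swap
    have := hV.comp measurable_swap
    fun_prop
  have hint : ∫⁻ ω, ∫⁻ ϑ, ENNReal.ofReal (normalMixture c (Δ ϑ ω) (V ϑ ω)) ∂p₀ ∂μ ≤ 1 :=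
    calc _ = ∫⁻ ϑ, ∫⁻ ω, ENNReal.ofReal (normalMixture c (Δ ϑ ω) (V ϑ ω)) ∂μ ∂p₀ :=
          lintegral_lintegral_swap hmeas.aemeasurable
      _ ≤ ∫⁻ _, 1 ∂p₀ := lintegral_mono fun ϑ =>
          lintegral_normalMixture_le_one (hΔ.comp measurable_prodMk_left)
            (hV.comp measurable_prodMk_left) (hV0 ϑ) (hcanon ϑ) hc
      _ = 1 := by simp
  have hmeasA : Measurable fun ω =>
      ∫⁻ ϑ, ENNReal.ofReal (normalMixture c (Δ ϑ ω) (V ϑ ω)) ∂p₀ :=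
    hmeas.lintegral_prod_right'
  calc μ {ω | ENNReal.ofReal (exp x) <
        ∫⁻ ϑ, ENNReal.ofReal (normalMixture c (Δ ϑ ω) (V ϑ ω)) ∂p₀}
      ≤ μ {ω | ENNReal.ofReal (exp x) ≤
        ∫⁻ ϑ, ENNReal.ofReal (normalMixture c (Δ ϑ ω) (V ϑ ω)) ∂p₀} :=
        measure_mono (Set.ofPred_subset_ofPred.2 fun _ h => h.le)
    _ ≤ (∫⁻ ω, ∫⁻ ϑ, ENNReal.ofReal (normalMixture c (Δ ϑ ω) (V ϑ ω)) ∂p₀ ∂μ) /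
        ENNReal.ofReal (exp x) :=
        meas_ge_le_lintegral_div hmeasA.aemeasurable (ENNReal.ofReal_pos.2 (exp_pos x)).ne'
          ENNReal.ofReal_ne_top
    _ ≤ 1 / ENNReal.ofReal (exp x) := by gcongr
    _ = ENNReal.ofReal (exp (-x)) := by
      rw [one_div, ← ENNReal.ofReal_inv_of_pos (exp_pos x), exp_neg]

theorem measure_sqrt_lt_abs_integral_le [SFinite μ] [IsProbabilityMeasure p₀]
    {ρ : Ω → Measure Θ} [∀ ω, IsProbabilityMeasure (ρ ω)]
    (hΔ : Measurable (Function.uncurry Δ)) (hV : Measurable (Function.uncurry V))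
    (hV0 : ∀ ϑ ω, 0 ≤ V ϑ ω)
    (hcanon : ∀ ϑ, ∀ t : ℝ, ∫⁻ ω, ENNReal.ofReal (exp (t * Δ ϑ ω - t ^ 2 / 2 * V ϑ ω)) ∂μ ≤ 1)
    (hac : ∀ᵐ ω ∂μ, ρ ω ≪ p₀) (hllr : ∀ᵐ ω ∂μ, Integrable (llr (ρ ω) p₀) (ρ ω))
    (hΔρ : ∀ᵐ ω ∂μ, Integrable (fun ϑ => Δ ϑ ω) (ρ ω))
    (hVρ : ∀ᵐ ω ∂μ, Integrable (fun ϑ => V ϑ ω) (ρ ω))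
    (hVμ : Integrable (fun ω => ∫ ϑ, V ϑ ω ∂ρ ω) μ)
    {c x : ℝ} (hc : 0 < c) (hEc : ∫ ω, ∫ ϑ, V ϑ ω ∂ρ ω ∂μ ≤ c) (hx : 1 ≤ exp x - exp (-x)) :
    μ {ω | √(2 * (c + ∫ ϑ, V ϑ ω ∂ρ ω) * (∫ ϑ, llr (ρ ω) p₀ ϑ ∂ρ ω + 2 * x)) <
        |∫ ϑ, Δ ϑ ω ∂ρ ω|} ≤ ENNReal.ofReal (2 * exp (-x)) := by
  have hx0 : 0 < x := by
    by_contra! h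
    linarith [exp_le_one_iff.2 h, one_le_exp_iff.2 (neg_nonneg.2 h)]
  have he2x : 0 < c * (exp (2 * x) - 1) :=
    mul_pos hc (sub_pos.2 (one_lt_exp_iff.2 (by positivity)))
  have hsub : ∀ᵐ ω ∂μ,
      √(2 * (c + ∫ ϑ, V ϑ ω ∂ρ ω) * (∫ ϑ, llr (ρ ω) p₀ ϑ ∂ρ ω + 2 * x)) < |∫ ϑ, Δ ϑ ω ∂ρ ω| →
      ENNReal.ofReal (exp x) < ∫⁻ ϑ, ENNReal.ofReal (normalMixture c (Δ ϑ ω) (V ϑ ω)) ∂p₀ ∨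
      c * (exp (2 * x) - 1) < ∫ ϑ, V ϑ ω ∂ρ ω := by
    filter_upwards [hac, hllr, hΔρ, hVρ] with ω hacω hllrω hΔω hVω hbad
    contrapose! hbad
    exact abs_integral_le_of_lintegral_normalMixture_le hacω hllrω
      (hΔ.comp measurable_prodMk_right) (hV.comp measurable_prodMk_right) (hV0 · ω) hΔω hVω hc
      hx0 hbad.1 hbad.2
  have hMarkov : (∫ ω, ∫ ϑ, V ϑ ω ∂ρ ω ∂μ) / (c * (exp (2 * x) - 1)) ≤ exp (-x) := by
    have : exp (-x) * (c * (exp (2 * x) - 1)) = c * (exp x - exp (-x)) := by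
      rw [show exp x = exp (-x) * exp (2 * x) by rw [← exp_add]; ring_nf]
      ring
    rw [div_le_iff₀ he2x, this]
    nlinarith
  calc _ ≤ μ ({ω | ENNReal.ofReal (exp x) <
          ∫⁻ ϑ, ENNReal.ofReal (normalMixture c (Δ ϑ ω) (V ϑ ω)) ∂p₀} ∪
          {ω | c * (exp (2 * x) - 1) < ∫ ϑ, V ϑ ω ∂ρ ω}) := measure_mono_ae hsub
    _ ≤ ENNReal.ofReal (exp (-x)) + ENNReal.ofReal (exp (-x)) :=
      (measure_union_le _ _).trans <| add_le_add
        (measure_exp_lt_lintegral_normalMixture_le hΔ hV hV0 hcanon hc x)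
        ((measure_lt_le_ofReal_integral_div (fun ω => integral_nonneg (hV0 · ω)) hVμ he2x).trans
          (ENNReal.ofReal_le_ofReal hMarkov))
    _ = ENNReal.ofReal (2 * exp (-x)) := by
      rw [← ENNReal.ofReal_add (exp_pos _).le (exp_pos _).le, two_mul]

end PACBayes

theorem stmt7_general
    {Ω Z Θ : Type*} [MeasurableSpace Ω] [MeasurableSpace Z] [MeasurableSpace Θ]
    {μ : Measure Ω} [IsProbabilityMeasure μ]
    (S : Ω → Z)
    (Δ V : Θ → Ω → ℝ)
    (hΔ : Measurable (Function.uncurry Δ)) (hVmeas : Measurable (Function.uncurry V))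
    (hV0 : ∀ ϑ ω, 0 ≤ V ϑ ω)
    -- each pair `(Δ_ϑ, √V_ϑ)` is a canonical pair
    (hcanon : ∀ ϑ, ∀ lam : ℝ,
      ∫⁻ ω, ENNReal.ofReal (exp (lam * Δ ϑ ω - lam ^ 2 / 2 * V ϑ ω)) ∂μ ≤ 1)
    (phat : Kernel Z Θ) [IsMarkovKernel phat]
    (p0 : Measure Θ) [IsProbabilityMeasure p0]
    -- a.s. absolute continuity and a.s. finiteness of the KL divergence
    (hac : ∀ᵐ ω ∂μ, phat (S ω) ≪ p0)
    (hKLint : ∀ᵐ ω ∂μ,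
      Integrable (fun ϑ => log ((phat (S ω)).rnDeriv p0 ϑ).toReal) (phat (S ω)))
    (KL : Ω → ℝ)
    (hKL : KL = fun ω => ∫ ϑ, log ((phat (S ω)).rnDeriv p0 ϑ).toReal ∂(phat (S ω)))
    -- `E[Δ_θ | S]` and `E[V_θ | S]` are well defined and finite
    (hΔint : ∀ᵐ ω ∂μ, Integrable (fun ϑ => Δ ϑ ω) (phat (S ω)))
    (hVint : ∀ᵐ ω ∂μ, Integrable (fun ϑ => V ϑ ω) (phat (S ω)))
    (Dbar Vbar : Ω → ℝ)
    (hDbar : Dbar = fun ω => ∫ ϑ, Δ ϑ ω ∂(phat (S ω)))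
    (hVbar : Vbar = fun ω => ∫ ϑ, V ϑ ω ∂(phat (S ω)))
    -- `E[V_θ]` is well defined and finite
    (hVbarInt : Integrable Vbar μ)
    (EV : ℝ) (hEV : EV = ∫ ω, Vbar ω ∂μ)
    (x : ℝ) :
    ENNReal.ofReal (1 - 2 * exp (-x)) ≤
      μ {ω | |Dbar ω| ≤ sqrt (2 * (EV + Vbar ω) * (KL ω + 2 * x))} := by
  rcases le_or_gt (1 - 2 * exp (-x)) 0 with htriv | hpos
  · simp [ENNReal.ofReal_eq_zero.2 htriv]
  suffices hbad : μ {ω | |Dbar ω| ≤ √(2 * (EV + Vbar ω) * (KL ω + 2 * x))}ᶜ ≤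
      ENNReal.ofReal (2 * exp (-x)) by
    calc ENNReal.ofReal (1 - 2 * exp (-x)) = 1 - ENNReal.ofReal (2 * exp (-x)) := by
          rw [ENNReal.ofReal_sub _ (by positivity), ENNReal.ofReal_one]
      _ ≤ 1 - μ _ := tsub_le_tsub_left hbad 1
      _ ≤ _ := tsub_le_iff_right.2 (measure_univ (μ := μ) ▸ measure_univ_le_add_compl _)
  have hx : 1 ≤ exp x - exp (-x) := by
    nlinarith [exp_pos x, exp_neg x, mul_inv_cancel₀ (exp_pos x).ne']
  have hEV0 : 0 ≤ EV := hEV ▸ integral_nonneg fun ω => hVbar ▸ integral_nonneg (hV0 · ω)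
  subst hKL hDbar hVbar hEV
  refine measure_le_of_forall_eventually_mem (fun n => measure_sqrt_lt_abs_integral_le
    (ρ := fun ω => phat (S ω)) hΔ hVmeas hV0 hcanon hac hKLint hΔint hVint hVbarInt
    (c := _ + 1 / ((n : ℝ) + 1)) (by positivity) (le_add_of_nonneg_right (by positivity)) hx)
    fun ω hω => ?_
  rw [Set.mem_compl_iff, Set.mem_ofPred_eq, not_le] at hω
  have hlim := ((((tendsto_one_div_add_atTop_nhds_zero_nat (𝕜 := ℝ)).const_add
    (∫ ω, ∫ ϑ, V ϑ ω ∂phat (S ω) ∂μ)).add_const (∫ ϑ, V ϑ ω ∂phat (S ω))).const_mul 2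
    |>.mul_const (∫ ϑ, llr (phat (S ω)) p0 ϑ ∂phat (S ω) + 2 * x)).sqrt
  rw [add_zero] at hlim
  exact hlim.eventually_lt_const hω

/-- for any `x ≥ 0`, with probability at least `1 − 2e^{−x}`,
`|E[Δ_θ|S]| ≤ √(2 (E[V_θ] + E[V_θ|S]) (KL(p̂_S‖p⁰) + 2x))`. -/
theorem stmt7
    {Ω Z Θ : Type*} [MeasurableSpace Ω] [MeasurableSpace Z] [MeasurableSpace Θ]
    {μ : Measure Ω} [IsProbabilityMeasure μ]
    (S : Ω → Z) (hS : Measurable S)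
    (Δ V : Θ → Ω → ℝ)
    (hΔ : Measurable (Function.uncurry Δ)) (hVmeas : Measurable (Function.uncurry V))
    (hV0 : ∀ ϑ ω, 0 ≤ V ϑ ω)
    -- each pair `(Δ_ϑ, √V_ϑ)` is a canonical pair
    (hcanon : ∀ ϑ, ∀ lam : ℝ,
      ∫⁻ ω, ENNReal.ofReal (exp (lam * Δ ϑ ω - lam ^ 2 / 2 * V ϑ ω)) ∂μ ≤ 1)
    (phat : Kernel Z Θ) [IsMarkovKernel phat]
    (p0 : Measure Θ) [IsProbabilityMeasure p0]
    -- a.s. absolute continuity and a.s. finiteness of the KL divergence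
    (hac : ∀ᵐ ω ∂μ, phat (S ω) ≪ p0)
    (hKLint : ∀ᵐ ω ∂μ,
      Integrable (fun ϑ => log ((phat (S ω)).rnDeriv p0 ϑ).toReal) (phat (S ω)))
    (KL : Ω → ℝ)
    (hKL : KL = fun ω => ∫ ϑ, log ((phat (S ω)).rnDeriv p0 ϑ).toReal ∂(phat (S ω)))
    -- `E[Δ_θ | S]` and `E[V_θ | S]` are well defined and finite
    (hΔint : ∀ᵐ ω ∂μ, Integrable (fun ϑ => Δ ϑ ω) (phat (S ω)))
    (hVint : ∀ᵐ ω ∂μ, Integrable (fun ϑ => V ϑ ω) (phat (S ω)))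
    (Dbar Vbar : Ω → ℝ)
    (hDbar : Dbar = fun ω => ∫ ϑ, Δ ϑ ω ∂(phat (S ω)))
    (hVbar : Vbar = fun ω => ∫ ϑ, V ϑ ω ∂(phat (S ω)))
    -- `E[V_θ]` is well defined and finite
    (hVbarInt : Integrable Vbar μ)
    (EV : ℝ) (hEV : EV = ∫ ω, Vbar ω ∂μ)
    (x : ℝ) (hx : 0 ≤ x) :
    ENNReal.ofReal (1 - 2 * exp (-x)) ≤
      μ {ω | |Dbar ω| ≤ sqrt (2 * (EV + Vbar ω) * (KL ω + 2 * x))} :=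
  stmt7_general S Δ V hΔ hVmeas hV0 hcanon phat p0 hac hKLint KL hKL hΔint hVint Dbar Vbar hDbar
    hVbar hVbarInt EV hEV x
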